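/- Fix A > 0 and for B > 0 define λ*₀(B) := (3A/2)·[1 − 3(√B − tanh(√B))/(B·tanh(√B))]^{−1}. Then 0 < 3(√B − tanh(√B))/(B·tanh(√B)) < 1 for every B > 0 (so λ*₀(B) is well defined and positive), the map B ↦ λ*₀(B) is strictly decreasing on (0,∞), and λ*₀(B) → 3A/2 as B → ∞. -/

import Mathlib

/-!
Substituting `s = √B` turns the ratio `3(√B - tanh √B)/(B tanh √B)` into
`sloshingRatio s = 3(s cosh s - sinh s)/(s² sinh s)`. Its bounds `0 < · < 1` and the sign of its
derivative on `(0, ∞)` reduce to three inequalities between `s`, `sinh s` and `cosh s`, each holding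
because the difference vanishes at `0` and has positive derivative (for the last one, after
differentiating twice). Since `cosh s ≤ sinh s + 1` and `s ≤ sinh s`, also `sloshingRatio s ≤ 3 / s`,
which gives the limit of `λ*₀(B) = (3A/2)(1 - sloshingRatio √B)⁻¹`.
-/

open Real Filter Set Topology

/-- The squared maximal sloshing frequency `λ*₀(B)` for `α = 0` with surface tension. -/
noncomputable def lamStar0 (A B : ℝ) : ℝ :=
  (3 * A / 2) * (1 - 3 * (Real.sqrt B - Real.tanh (Real.sqrt B)) /
    (B * Real.tanh (Real.sqrt B)))⁻¹

lemma pos_of_hasDerivAt_of_pos {f f' : ℝ → ℝ} (hf : ∀ x, HasDerivAt f (f' x) x) (h₀ : f 0 = 0)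
    (hf' : ∀ x, 0 < x → 0 < f' x) {x : ℝ} (hx : 0 < x) : 0 < f x := by
  have hmono : StrictMonoOn f (Ici 0) := by
    refine strictMonoOn_of_deriv_pos (convex_Ici 0)
      (fun y _ => (hf y).continuousAt.continuousWithinAt) fun y hy => ?_
    rw [interior_Ici] at hy
    rw [(hf y).deriv]
    exact hf' y hy
  simpa [h₀] using hmono self_mem_Ici hx.le hx

namespace Real

lemma sinh_lt_mul_cosh {s : ℝ} (hs : 0 < s) : sinh s < s * cosh s := by
  have hderiv (x : ℝ) : HasDerivAt (fun x => x * cosh x - sinh x) (x * sinh x) x := by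
    refine (((hasDerivAt_id' x).mul (hasDerivAt_cosh x)).sub (hasDerivAt_sinh x)).congr_deriv ?_
    ring
  have := pos_of_hasDerivAt_of_pos hderiv (by simp)
    (fun x hx => mul_pos hx (sinh_pos_iff.2 hx)) hs
  linarith

lemma three_mul_mul_cosh_lt {s : ℝ} (hs : 0 < s) :
    3 * s * cosh s < (s ^ 2 + 3) * sinh s := by
  have hderiv (x : ℝ) : HasDerivAt (fun x => (x ^ 2 + 3) * sinh x - 3 * x * cosh x)
      (x * (x * cosh x - sinh x)) x := by
    refine ((((hasDerivAt_pow 2 x).add_const 3).mul (hasDerivAt_sinh x)).sub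
      (((hasDerivAt_id' x).const_mul 3).mul (hasDerivAt_cosh x))).congr_deriv ?_
    push_cast
    ring
  have := pos_of_hasDerivAt_of_pos hderiv (by simp)
    (fun x hx => mul_pos hx (sub_pos.2 (sinh_lt_mul_cosh hx))) hs
  linarith

lemma two_mul_sinh_sq_lt {s : ℝ} (hs : 0 < s) :
    2 * sinh s ^ 2 < s ^ 2 + s * sinh s * cosh s := by
  have hderiv₂ (x : ℝ) : HasDerivAt
      (fun x => 2 * x + x * (cosh x ^ 2 + sinh x ^ 2) - 3 * sinh x * cosh x)
      (4 * sinh x * (x * cosh x - sinh x)) x := by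
    refine ((((hasDerivAt_id' x).const_mul 2).add ((hasDerivAt_id' x).mul
      (((hasDerivAt_cosh x).pow 2).add ((hasDerivAt_sinh x).pow 2)))).sub
      (((hasDerivAt_sinh x).const_mul 3).mul (hasDerivAt_cosh x))).congr_deriv ?_
    simp only [Pi.add_apply, Pi.pow_apply, Nat.cast_ofNat]
    linear_combination (-2) * cosh_sq x
  have hderiv₁ (x : ℝ) : HasDerivAt (fun x => x ^ 2 + x * sinh x * cosh x - 2 * sinh x ^ 2)
      (2 * x + x * (cosh x ^ 2 + sinh x ^ 2) - 3 * sinh x * cosh x) x := by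
    refine (((hasDerivAt_pow 2 x).add (((hasDerivAt_id' x).mul (hasDerivAt_sinh x)).mul
      (hasDerivAt_cosh x))).sub (((hasDerivAt_sinh x).pow 2).const_mul 2)).congr_deriv ?_
    simp only [Pi.mul_apply, Nat.cast_ofNat]
    ring
  have hderiv₁_pos : ∀ x, 0 < x → 0 < 2 * x + x * (cosh x ^ 2 + sinh x ^ 2) - 3 * sinh x * cosh x :=
    fun x hx => pos_of_hasDerivAt_of_pos hderiv₂ (by simp) (fun y hy =>
      mul_pos (mul_pos four_pos (sinh_pos_iff.2 hy)) (sub_pos.2 (sinh_lt_mul_cosh hy))) hx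
  have := pos_of_hasDerivAt_of_pos hderiv₁ (by simp) hderiv₁_pos hs
  linarith

end Real

noncomputable def sloshingRatio (s : ℝ) : ℝ :=
  3 * (s * cosh s - sinh s) / (s ^ 2 * sinh s)

lemma sloshingRatio_sqrt (B : ℝ) :
    3 * (√B - tanh √B) / (B * tanh √B) = sloshingRatio √B := by
  rcases (sqrt_nonneg B).eq_or_lt with h | h
  · simp [← h, sloshingRatio]
  · have hsinh : 0 < sinh √B := sinh_pos_iff.2 h
    have hcosh : 0 < cosh √B := cosh_pos _
    rw [sloshingRatio, tanh_eq_sinh_div_cosh, sq_sqrt (sqrt_pos.1 h).le]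
    field_simp

lemma lamStar0_eq (A B : ℝ) : lamStar0 A B = 3 * A / 2 * (1 - sloshingRatio √B)⁻¹ := by
  rw [lamStar0, sloshingRatio_sqrt]

lemma sloshingRatio_pos {s : ℝ} (hs : 0 < s) : 0 < sloshingRatio s := by
  have := sinh_pos_iff.2 hs
  exact div_pos (by linarith [sinh_lt_mul_cosh hs]) (by positivity)

lemma sloshingRatio_lt_one {s : ℝ} (hs : 0 < s) : sloshingRatio s < 1 := by
  have := sinh_pos_iff.2 hs
  rw [sloshingRatio, div_lt_one (by positivity)]
  linarith [three_mul_mul_cosh_lt hs]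

lemma sloshingRatio_le_three_div {s : ℝ} (hs : 0 < s) : sloshingRatio s ≤ 3 / s := by
  have hsinh := sinh_pos_iff.2 hs
  have hcosh : cosh s ≤ sinh s + 1 := by
    linarith [cosh_sub_sinh s, exp_le_one_iff.2 (neg_nonpos.2 hs.le)]
  rw [sloshingRatio, div_le_div_iff₀ (by positivity) hs]
  nlinarith [self_le_sinh_iff.2 hs.le, mul_le_mul_of_nonneg_left hcosh hs.le]

lemma hasDerivAt_sloshingRatio {s : ℝ} (hs : 0 < s) :
    HasDerivAt sloshingRatio
      (-3 * (s ^ 2 + s * sinh s * cosh s - 2 * sinh s ^ 2) / (s ^ 3 * sinh s ^ 2)) s := by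
  have hsinh := sinh_pos_iff.2 hs
  have hnum : HasDerivAt (fun s => 3 * (s * cosh s - sinh s)) (3 * (s * sinh s)) s :=
    ((((hasDerivAt_id' s).mul (hasDerivAt_cosh s)).sub (hasDerivAt_sinh s)).const_mul 3).congr_deriv
      (by ring)
  have hden : HasDerivAt (fun s => s ^ 2 * sinh s) (2 * s * sinh s + s ^ 2 * cosh s) s :=
    ((hasDerivAt_pow 2 s).mul (hasDerivAt_sinh s)).congr_deriv (by push_cast; ring)
  refine (hnum.div hden (by positivity)).congr_deriv ?_
  field_simp
  linear_combination (-s ^ 2) * cosh_sq s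

lemma strictAntiOn_sloshingRatio : StrictAntiOn sloshingRatio (Ioi 0) := by
  refine strictAntiOn_of_deriv_neg (convex_Ioi 0)
    (fun s hs => (hasDerivAt_sloshingRatio hs).continuousAt.continuousWithinAt) fun s hs => ?_
  rw [interior_Ioi] at hs
  have hsinh := sinh_pos_iff.2 hs
  rw [(hasDerivAt_sloshingRatio hs).deriv]
  exact div_neg_of_neg_of_pos (by nlinarith [two_mul_sinh_sq_lt hs])
    (mul_pos (pow_pos hs 3) (pow_pos hsinh 2))

lemma tendsto_sloshingRatio_atTop : Tendsto sloshingRatio atTop (𝓝 0) := by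
  refine tendsto_of_tendsto_of_tendsto_of_le_of_le' tendsto_const_nhds
    ((tendsto_const_nhds (x := (3 : ℝ))).div_atTop tendsto_id) ?_ ?_ <;>
    filter_upwards [eventually_gt_atTop 0] with s hs
  exacts [(sloshingRatio_pos hs).le, sloshingRatio_le_three_div hs]

theorem lamStar0_monotone_limit (A : ℝ) (hA : 0 < A) :
    (∀ B : ℝ, 0 < B →
      0 < 3 * (Real.sqrt B - Real.tanh (Real.sqrt B)) / (B * Real.tanh (Real.sqrt B)) ∧
      3 * (Real.sqrt B - Real.tanh (Real.sqrt B)) / (B * Real.tanh (Real.sqrt B)) < 1) ∧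
    StrictAntiOn (lamStar0 A) (Set.Ioi 0) ∧
    Filter.Tendsto (lamStar0 A) Filter.atTop (nhds (3 * A / 2)) := by
  refine ⟨fun B hB => ?_, fun B₁ hB₁ B₂ hB₂ hlt => ?_, ?_⟩
  · rw [sloshingRatio_sqrt]
    exact ⟨sloshingRatio_pos (sqrt_pos.2 hB), sloshingRatio_lt_one (sqrt_pos.2 hB)⟩
  · have hs₁ : 0 < √B₁ := sqrt_pos.2 hB₁
    have hs₂ : 0 < √B₂ := sqrt_pos.2 hB₂
    have hratio := strictAntiOn_sloshingRatio hs₁ hs₂ (sqrt_lt_sqrt (le_of_lt hB₁) hlt)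
    rw [lamStar0_eq, lamStar0_eq]
    have hgap := sub_pos.2 (sloshingRatio_lt_one hs₁)
    gcongr
  · have h := tendsto_const_nhds (x := 3 * A / 2) |>.mul
      ((tendsto_const_nhds.sub (tendsto_sloshingRatio_atTop.comp tendsto_sqrt_atTop)).inv₀
        (by norm_num : (1 : ℝ) - 0 ≠ 0))
    rw [sub_zero, inv_one, mul_one] at h
    exact h.congr fun B => (lamStar0_eq A B).symm
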